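/- Let p ≥ 3 be prime, 0 < x < p, k ≥ 1, d ≥ 1 and define S_k(x, p^r) = Σ 1/i^k over integers 0 < i < p^r with i ≡ x (mod p). Then for every r ≥ 2, (S_k(x, p^{r+1}))^d ≡ p^d · (S_k(x, p^r))^d (mod p^{dr+2}). -/

import Mathlib

/-- `S p k x R = ∑_{0 < i < R, i ≡ x (mod p)} 1/i^k`. -/
def S (p k x R : ℕ) : ℚ :=
  ∑ i ∈ (Finset.Ioo 0 R).filter (fun i => i % p = x % p), (1 : ℚ) / (i : ℚ)^k

/-!
Work in `ℚ_[p]` and write `a_j = x + j p`, so that `S(p^(s+1)) = ∑_{j < p^s} a_j⁻¹ ^ k`.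
Splitting the `p^r` terms of `S(p^(r+1))` into the `p` blocks `a_j + t p^r` (`t < p`) and
expanding `(a + u)⁻¹ ^ k ≡ a⁻¹ ^ k - k u a⁻¹ ^ (k+1) (mod u²)` gives
`S(p^(r+1)) - p S(p^r) ≡ -k p^r (∑_{t<p} t) ∑_{j<p^(r-1)} a_j⁻¹ ^ (k+1) (mod p^(2r))`.
As `p` is odd, `p ∣ ∑_{t<p} t = p(p-1)/2`, and the last sum is
`≡ p^(r-1) x⁻¹ ^ (k+1) ≡ 0 (mod p)`, so `S(p^(r+1)) ≡ p S(p^r) (mod p^(r+2))`.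
Inductively `p^(s-1) ∣ S(p^s)`, hence `A = S(p^(r+1))` and `B = p S(p^r)` are both divisible
by `p^r`, and `A^d - B^d = (A - B) ∑ A^i B^(d-1-i)` by `p^(r+2) p^(r(d-1))`.
-/

open Finset

section Ultrametric

theorem norm_sum_le_of_norm_sub_le {M ι : Type*}
    [SeminormedAddCommGroup M] [IsUltrametricDist M]
    {s : Finset ι} {f : ι → M} {c : M} {ε : ℝ} (hf : ∀ i ∈ s, ‖f i - c‖ ≤ ε)
    (hc : ‖#s • c‖ ≤ ε) : ‖∑ i ∈ s, f i‖ ≤ ε := by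
  have hε : 0 ≤ ε := (norm_nonneg _).trans hc
  have hsplit : ∑ i ∈ s, f i = ∑ i ∈ s, (f i - c) + #s • c := by
    rw [sum_sub_distrib, sum_const, sub_add_cancel]
  rw [hsplit]
  exact (IsUltrametricDist.norm_add_le_max _ _).trans
    (max_le (IsUltrametricDist.norm_sum_le_of_forall_le_of_nonneg hε hf) hc)

variable {K : Type*} [NormedField K] [IsUltrametricDist K]

theorem norm_pow_sub_pow_le {a b : K} {c : ℝ} (ha : ‖a‖ ≤ c) (hb : ‖b‖ ≤ c) (d : ℕ) :
    ‖a ^ d - b ^ d‖ ≤ ‖a - b‖ * c ^ (d - 1) := by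
  have hc : 0 ≤ c := (norm_nonneg a).trans ha
  rw [← geom_sum₂_mul, norm_mul, mul_comm]
  gcongr
  refine IsUltrametricDist.norm_sum_le_of_forall_le_of_nonneg (by positivity) fun i hi => ?_
  calc ‖a ^ i * b ^ (d - 1 - i)‖ ≤ c ^ i * c ^ (d - 1 - i) := by
        rw [norm_mul, norm_pow, norm_pow]; gcongr
    _ = c ^ (d - 1) := by rw [← pow_add]; congr 1; have := mem_range.1 hi; omega

theorem norm_inv_pow_sub_inv_pow_le {a b : K} (ha : ‖a‖ = 1) (hb : ‖b‖ = 1) (k : ℕ) :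
    ‖b⁻¹ ^ k - a⁻¹ ^ k‖ ≤ ‖b - a‖ := by
  have ha0 : a ≠ 0 := norm_ne_zero_iff.1 (by simp [ha])
  have hb0 : b ≠ 0 := norm_ne_zero_iff.1 (by simp [hb])
  calc ‖b⁻¹ ^ k - a⁻¹ ^ k‖ ≤ ‖b⁻¹ - a⁻¹‖ * 1 ^ (k - 1) :=
        norm_pow_sub_pow_le (by simp [hb]) (by simp [ha]) k
    _ = ‖b - a‖ := by
        rw [one_pow, mul_one, inv_sub_inv hb0 ha0, norm_div, norm_mul, ha, hb, mul_one, div_one,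
          norm_sub_rev]

/-- Second-order Taylor expansion of `t ↦ t⁻¹ ^ k` at a unit. -/
theorem norm_inv_add_pow_sub_inv_pow_add_le {a u : K} (ha : ‖a‖ = 1) (hu : ‖u‖ < 1)
    (k : ℕ) :
    ‖(a + u)⁻¹ ^ k - a⁻¹ ^ k + k * u * a⁻¹ ^ (k + 1)‖ ≤ ‖u‖ ^ 2 := by
  have hau : ‖a + u‖ = 1 := by
    rw [add_comm, IsUltrametricDist.norm_add_eq_max_of_norm_ne_norm (by linarith), ha]
    exact max_eq_right hu.le
  have ha0 : a ≠ 0 := norm_ne_zero_iff.1 (by simp [ha])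
  have hau0 : a + u ≠ 0 := norm_ne_zero_iff.1 (by simp [hau])
  induction k with
  | zero => simp
  | succ k ih =>
    have hres : (a + u)⁻¹ - a⁻¹ + u * a⁻¹ * (a + u)⁻¹ = 0 := by
      field_simp
      ring
    have hrec : (a + u)⁻¹ ^ (k + 1) - a⁻¹ ^ (k + 1) + (k + 1 : ℕ) * u * a⁻¹ ^ (k + 1 + 1)
        = (a + u)⁻¹ * ((a + u)⁻¹ ^ k - a⁻¹ ^ k + k * u * a⁻¹ ^ (k + 1))
          + (k + 1 : ℕ) * (a + u)⁻¹ * a⁻¹ ^ (k + 2) * u ^ 2 := by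
      push_cast
      linear_combination (a⁻¹ ^ k - (k + 1) * u * a⁻¹ ^ (k + 1)) * hres
    rw [hrec]
    refine (IsUltrametricDist.norm_add_le_max _ _).trans (max_le ?_ ?_)
    · rw [norm_mul, norm_inv, hau, inv_one, one_mul]
      exact ih
    · rw [norm_mul, norm_mul, norm_mul, norm_inv, norm_pow, norm_inv, hau, ha, norm_pow]
      simpa using mul_le_of_le_one_left (by positivity)
        (IsUltrametricDist.norm_natCast_le_one K (k + 1))

end Ultrametric

theorem sum_range_mul_eq_sum_sum {M : Type*} [AddCommMonoid M] (f : ℕ → M) (m n : ℕ) :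
    ∑ i ∈ range (m * n), f i = ∑ t ∈ range m, ∑ j ∈ range n, f (t * n + j) := by
  induction m with
  | zero => simp
  | succ m ih => rw [Nat.succ_mul, sum_range_add, ih, sum_range_succ]

theorem filter_Ioo_mod_eq_eq_image {p x : ℕ} (hx : 0 < x) (hxp : x < p) (s : ℕ) :
    (Ioo 0 (p ^ (s + 1))).filter (fun i => i % p = x % p)
      = (range (p ^ s)).image (· * p + x) := by
  ext i
  simp only [mem_filter, mem_Ioo, mem_image, mem_range, Nat.mod_eq_of_lt hxp, pow_succ]
  constructor
  · rintro ⟨⟨-, hi⟩, hmod⟩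
    exact ⟨i / p, Nat.div_lt_of_lt_mul (by linarith), by rw [← hmod, Nat.div_add_mod']⟩
  · rintro ⟨j, hj, rfl⟩
    refine ⟨⟨by omega, by nlinarith⟩, by rw [Nat.mul_add_mod_self_right, Nat.mod_eq_of_lt hxp]⟩

section Padic

variable {p : ℕ} [hp : Fact p.Prime]

theorem Padic.norm_intCast_le_inv_pow_iff (z : ℤ) (n : ℕ) :
    ‖(z : ℚ_[p])‖ ≤ (p : ℝ)⁻¹ ^ n ↔ (p : ℤ) ^ n ∣ z := by
  rw [inv_pow, ← zpow_natCast, ← zpow_neg, Padic.norm_int_le_pow_iff_dvd]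

theorem Padic.norm_natCast_le_inv_pow_iff (m n : ℕ) :
    ‖(m : ℚ_[p])‖ ≤ (p : ℝ)⁻¹ ^ n ↔ p ^ n ∣ m := by
  exact_mod_cast Padic.norm_intCast_le_inv_pow_iff (p := p) m n

theorem Rat.pow_dvd_num_of_norm_le {q : ℚ} {n : ℕ} (h : ‖(q : ℚ_[p])‖ ≤ (p : ℝ)⁻¹ ^ n) :
    (p : ℤ) ^ n ∣ q.num := by
  have hnum : ((q.num : ℤ) : ℚ_[p]) = (q : ℚ_[p]) * (q.den : ℚ_[p]) := by
    exact_mod_cast (Rat.mul_den_eq_num q).symm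
  rw [← Padic.norm_intCast_le_inv_pow_iff, hnum, norm_mul]
  exact (mul_le_of_le_one_right (norm_nonneg _)
    (IsUltrametricDist.norm_natCast_le_one _ _)).trans h

theorem Padic.norm_natCast_add_mul_eq_one {x : ℕ} (hx : ¬ p ∣ x) (j : ℕ) :
    ‖(x + j * p : ℚ_[p])‖ = 1 := by
  rw [← Nat.cast_mul, ← Nat.cast_add, Padic.norm_natCast_eq_one_iff,
    hp.out.coprime_iff_not_dvd, Nat.dvd_add_left (dvd_mul_left p j)]
  exact hx

theorem Padic.norm_sum_range_natCast_le (hp2 : p ≠ 2) :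
    ‖∑ t ∈ range p, (t : ℚ_[p])‖ ≤ (p : ℝ)⁻¹ := by
  have hcop : p.Coprime 2 := (Nat.coprime_primes hp.out Nat.prime_two).2 hp2
  have hdvd : p ∣ ∑ t ∈ range p, t :=
    hcop.dvd_of_dvd_mul_right ⟨p - 1, sum_range_id_mul_two p⟩
  rw [← Nat.cast_sum, ← pow_one (p : ℝ)⁻¹, Padic.norm_natCast_le_inv_pow_iff, pow_one]
  exact hdvd

theorem Padic.norm_p_mul_le_of_le {y : ℚ_[p]} {s : ℕ} (h : ‖y‖ ≤ (p : ℝ)⁻¹ ^ s) :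
    ‖(p * y : ℚ_[p])‖ ≤ (p : ℝ)⁻¹ ^ (s + 1) := by
  rw [norm_mul, Padic.norm_p, pow_succ']
  gcongr

variable (p) in
noncomputable def progSum (k x n : ℕ) : ℚ_[p] :=
  ∑ j ∈ range n, ((x : ℚ_[p]) + j * p)⁻¹ ^ k

theorem S_pow_succ_eq_progSum {x : ℕ} (hx : 0 < x) (hxp : x < p) (k s : ℕ) :
    (S p k x (p ^ (s + 1)) : ℚ_[p]) = progSum p k x (p ^ s) := by
  have hinj : Set.InjOn (· * p + x) (range (p ^ s)) := fun a _ b _ h =>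
    Nat.eq_of_mul_eq_mul_right hp.out.pos (by simpa using h)
  rw [S, filter_Ioo_mod_eq_eq_image hx hxp, sum_image hinj, progSum]
  push_cast
  simp only [one_div, inv_pow, add_comm]

theorem norm_progSum_le {x : ℕ} (hx : ¬ p ∣ x) (k : ℕ) {n : ℕ} (hn : p ∣ n) :
    ‖progSum p k x n‖ ≤ (p : ℝ)⁻¹ := by
  have hx1 : ‖(x : ℚ_[p])‖ = 1 := by simpa using Padic.norm_natCast_add_mul_eq_one hx 0
  refine norm_sum_le_of_norm_sub_le (c := (x : ℚ_[p])⁻¹ ^ k) (fun j _ => ?_) ?_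
  · calc ‖((x : ℚ_[p]) + j * p)⁻¹ ^ k - (x : ℚ_[p])⁻¹ ^ k‖
        ≤ ‖(x : ℚ_[p]) + j * p - x‖ :=
          norm_inv_pow_sub_inv_pow_le hx1 (Padic.norm_natCast_add_mul_eq_one hx j) k
      _ ≤ (p : ℝ)⁻¹ := by
          rw [add_sub_cancel_left, norm_mul, Padic.norm_p]
          exact mul_le_of_le_one_left (by positivity)
            (IsUltrametricDist.norm_natCast_le_one _ _)
  · rw [card_range, nsmul_eq_mul, norm_mul, norm_pow, norm_inv, hx1, inv_one, one_pow, mul_one,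
      ← pow_one (p : ℝ)⁻¹, Padic.norm_natCast_le_inv_pow_iff, pow_one]
    exact hn

theorem progSum_pow_succ_sub_eq (k x s : ℕ) :
    progSum p k x (p ^ (s + 1)) - p * progSum p k x (p ^ s)
      = ∑ t ∈ range p, ∑ j ∈ range (p ^ s),
          (((x + j * p : ℚ_[p]) + t * p ^ (s + 1))⁻¹ ^ k - (x + j * p : ℚ_[p])⁻¹ ^ k
            + k * (t * p ^ (s + 1)) * (x + j * p : ℚ_[p])⁻¹ ^ (k + 1))
        - k * p ^ (s + 1) * (∑ t ∈ range p, (t : ℚ_[p])) * progSum p (k + 1) x (p ^ s) := by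
  have hfine : progSum p k x (p ^ (s + 1))
      = ∑ t ∈ range p, ∑ j ∈ range (p ^ s),
          ((x + j * p : ℚ_[p]) + t * p ^ (s + 1))⁻¹ ^ k := by
    rw [progSum, pow_succ', sum_range_mul_eq_sum_sum]
    refine sum_congr rfl fun t _ => sum_congr rfl fun j _ => ?_
    push_cast
    ring
  have hcoarse : (p : ℚ_[p]) * progSum p k x (p ^ s)
      = ∑ t ∈ range p, ∑ j ∈ range (p ^ s), (x + j * p : ℚ_[p])⁻¹ ^ k := by
    rw [progSum, sum_const, card_range, nsmul_eq_mul]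
  have hlinear : k * p ^ (s + 1) * (∑ t ∈ range p, (t : ℚ_[p])) * progSum p (k + 1) x (p ^ s)
      = ∑ t ∈ range p, ∑ j ∈ range (p ^ s),
          k * (t * p ^ (s + 1)) * (x + j * p : ℚ_[p])⁻¹ ^ (k + 1) := by
    simp only [progSum, mul_sum, sum_mul]
    rw [sum_comm]
    exact sum_congr rfl fun t _ => sum_congr rfl fun j _ => by ring
  rw [hfine, hcoarse, hlinear]
  simp only [sum_add_distrib, sum_sub_distrib]
  ring

theorem norm_progSum_pow_succ_sub_le (hp2 : p ≠ 2) {x : ℕ} (hx : ¬ p ∣ x) (k : ℕ) {s : ℕ}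
    (hs : 1 ≤ s) :
    ‖progSum p k x (p ^ (s + 1)) - p * progSum p k x (p ^ s)‖ ≤ (p : ℝ)⁻¹ ^ (s + 3) := by
  have hε : (p : ℝ)⁻¹ ≤ 1 := inv_le_one_of_one_le₀ (by exact_mod_cast hp.out.one_le)
  have hu : ∀ t : ℕ, ‖(t * p ^ (s + 1) : ℚ_[p])‖ ≤ (p : ℝ)⁻¹ ^ (s + 1) := fun t => by
    rw [norm_mul, norm_pow, Padic.norm_p]
    exact mul_le_of_le_one_left (by positivity) (IsUltrametricDist.norm_natCast_le_one _ _)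
  rw [progSum_pow_succ_sub_eq, sub_eq_add_neg]
  refine (IsUltrametricDist.norm_add_le_max _ _).trans (max_le ?_ ?_)
  · refine IsUltrametricDist.norm_sum_le_of_forall_le_of_nonneg (by positivity) fun t _ =>
      IsUltrametricDist.norm_sum_le_of_forall_le_of_nonneg (by positivity) fun j _ => ?_
    calc _ ≤ ‖(t * p ^ (s + 1) : ℚ_[p])‖ ^ 2 :=
          norm_inv_add_pow_sub_inv_pow_add_le (Padic.norm_natCast_add_mul_eq_one hx j)
            ((hu t).trans_lt (pow_lt_one₀ (by positivity) (inv_lt_one_of_one_lt₀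
              (by exact_mod_cast hp.out.one_lt)) (by omega))) k
      _ ≤ ((p : ℝ)⁻¹ ^ (s + 1)) ^ 2 := by gcongr; exact hu t
      _ ≤ (p : ℝ)⁻¹ ^ (s + 3) := by
          rw [← pow_mul]; exact pow_le_pow_of_le_one (by positivity) hε (by omega)
  · rw [norm_neg, norm_mul, norm_mul, norm_mul, norm_pow, Padic.norm_p]
    calc _ ≤ 1 * (p : ℝ)⁻¹ ^ (s + 1) * (p : ℝ)⁻¹ * (p : ℝ)⁻¹ := by
          gcongr
          · exact IsUltrametricDist.norm_natCast_le_one _ _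
          · exact Padic.norm_sum_range_natCast_le hp2
          · exact norm_progSum_le hx (k + 1) (dvd_pow_self p (by omega))
      _ = (p : ℝ)⁻¹ ^ (s + 3) := by ring

theorem norm_progSum_pow_le (hp2 : p ≠ 2) {x : ℕ} (hx : ¬ p ∣ x) (k : ℕ) {s : ℕ} (hs : 1 ≤ s) :
    ‖progSum p k x (p ^ s)‖ ≤ (p : ℝ)⁻¹ ^ s := by
  have hε : (p : ℝ)⁻¹ ≤ 1 := inv_le_one_of_one_le₀ (by exact_mod_cast hp.out.one_le)
  induction s, hs using Nat.le_induction with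
  | base => simpa using norm_progSum_le hx k (dvd_pow_self p one_ne_zero)
  | succ s hs ih =>
    rw [← sub_add_cancel (progSum p k x (p ^ (s + 1))) (p * progSum p k x (p ^ s))]
    refine (IsUltrametricDist.norm_add_le_max _ _).trans (max_le ?_ ?_)
    · exact (norm_progSum_pow_succ_sub_le hp2 hx k hs).trans
        (pow_le_pow_of_le_one (by positivity) hε (by omega))
    · exact Padic.norm_p_mul_le_of_le ih

end Padic

theorem stmt10_general (p x k d : ℕ) (hp : p.Prime) (hp3 : 3 ≤ p) (hx : 0 < x) (hxp : x < p)
    (r : ℕ) (hr : 2 ≤ r) :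
    (p : ℤ)^(d*r+2) ∣ ((S p k x (p^(r+1)))^d - (p : ℚ)^d * (S p k x (p^r))^d).num := by
  have : Fact p.Prime := ⟨hp⟩
  obtain ⟨s, rfl⟩ : ∃ s, r = s + 1 := ⟨r - 1, by omega⟩
  have hp2 : p ≠ 2 := by omega
  have hpx : ¬ p ∣ x := fun h => (Nat.le_of_dvd hx h).not_gt hxp
  have hε : (p : ℝ)⁻¹ ≤ 1 := inv_le_one_of_one_le₀ (by exact_mod_cast hp.one_le)
  apply Rat.pow_dvd_num_of_norm_le
  push_cast
  rw [S_pow_succ_eq_progSum hx hxp, S_pow_succ_eq_progSum hx hxp, ← mul_pow]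
  have hA := norm_progSum_pow_le hp2 hpx k (s := s + 1) (by omega)
  have hB := Padic.norm_p_mul_le_of_le (norm_progSum_pow_le hp2 hpx k (s := s) (by omega))
  calc _ ≤ _ * ((p : ℝ)⁻¹ ^ (s + 1)) ^ (d - 1) := norm_pow_sub_pow_le hA hB d
    _ ≤ (p : ℝ)⁻¹ ^ (s + 3) * ((p : ℝ)⁻¹ ^ (s + 1)) ^ (d - 1) := by
        gcongr
        exact norm_progSum_pow_succ_sub_le hp2 hpx k (by omega)
    _ ≤ (p : ℝ)⁻¹ ^ (d * (s + 1) + 2) := by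
        rw [← pow_mul, ← pow_add]
        refine pow_le_pow_of_le_one (by positivity) hε ?_
        rcases d with _ | d
        · omega
        · rw [Nat.add_sub_cancel]; ring_nf; omega

theorem stmt10 (p x k d : ℕ) (hp : p.Prime) (hp3 : 3 ≤ p) (hx : 0 < x) (hxp : x < p)
    (hk : 1 ≤ k) (hd : 1 ≤ d) (r : ℕ) (hr : 2 ≤ r) :
    (p : ℤ)^(d*r+2) ∣ ((S p k x (p^(r+1)))^d - (p : ℚ)^d * (S p k x (p^r))^d).num :=
  stmt10_general p x k d hp hp3 hx hxp r hr
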